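/- arXiv:1109.6844 — 3 statements merged into one kernel-verified Lean document; each statement's English description precedes it below -/
import Mathlib

section
/- Let m > 0 and let ĝ = (ĝ_{ij}) (i,j = 1,…,4) be a real symmetric 4×4 matrix whose spatial block (ĝ_{AB}) (A,B = 2,3,4) is uniformly positive definite, i.e. there exists a > 0 such that ĝ_{AB} ξ^A ξ^B ≥ a² |ξ|² for all ξ ∈ ℝ³. Then the image of the mass shell F = { q = (q¹,q²,q³,q⁴) ∈ ℝ⁴ : ĝ_{ij} q^i q^j = −m², q¹ > 0 } under the map q ↦ (q²/q¹, q³/q¹, q⁴/q¹) is a bounded subset of ℝ³. -/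
/-!
By homogeneity, a point `q` of the mass shell gives `Q(1, w) = Q(q) / (q¹)² = -m² / (q¹)² ≤ 0`
for `w = (q^A / q¹)`. Splitting `Q(1, w) = ĝ₁₁ + b·w + ĝ_AB w^A w^B` and using uniform positivity
together with `2 |b·w| ≤ a² |w|² + |b|² / a²` yields `a² |w|² ≤ 2 |ĝ₁₁| + |b|² / a²`.
-/

open Finset Matrix

theorem quadForm_smul {ι : Type*} [Fintype ι] (g : Matrix ι ι ℝ) (c : ℝ) (q : ι → ℝ) :
    ∑ i, ∑ j, g i j * (c • q) i * (c • q) j = c ^ 2 * ∑ i, ∑ j, g i j * q i * q j := by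
  simp only [Pi.smul_apply, smul_eq_mul, mul_sum]
  exact sum_congr rfl fun i _ => sum_congr rfl fun j _ => by ring

theorem sum_sq_le_of_add_sum_mul_add_nonpos {ι : Type*} [Fintype ι] {a c s : ℝ} (ha : 0 < a)
    {b w : ι → ℝ} (hs : a ^ 2 * ∑ i, w i ^ 2 ≤ s) (h : c + ∑ i, b i * w i + s ≤ 0) :
    ∑ i, w i ^ 2 ≤ (2 * |c| + (∑ i, b i ^ 2) / a ^ 2) / a ^ 2 := by
  have ha2 : 0 < a ^ 2 := by positivity
  have hlin : 2 * ∑ i, b i * w i ≥ -(a ^ 2 * ∑ i, w i ^ 2 + (∑ i, b i ^ 2) / a ^ 2) := by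
    simp only [mul_sum, sum_div, ← sum_add_distrib, ← sum_neg_distrib]
    refine sum_le_sum fun i _ => ?_
    have := two_mul_le_add_sq (a * w i) (-b i / a)
    field_simp at this ⊢
    linarith
  rw [le_div_iff₀ ha2, mul_comm]
  linarith [neg_abs_le c]

theorem isBounded_setOf_sum_sq_le {ι : Type*} [Fintype ι] (C : ℝ) :
    Bornology.IsBounded {w : ι → ℝ | ∑ i, w i ^ 2 ≤ C} := by
  refine (Metric.isBounded_closedBall (x := 0) (r := √C)).subset fun w hw => ?_
  rw [mem_closedBall_zero_iff, pi_norm_le_iff_of_nonneg (Real.sqrt_nonneg _)]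
  exact fun i => Real.abs_le_sqrt <|
    (single_le_sum (fun j _ => sq_nonneg (w j)) (mem_univ i)).trans hw

section Spatial

variable {n : ℕ} (g : Matrix (Fin (n + 1)) (Fin (n + 1)) ℝ)

theorem quadForm_vecCons_one (w : Fin n → ℝ) :
    ∑ i, ∑ j, g i j * vecCons 1 w i * vecCons 1 w j =
      g 0 0 + ∑ A, (g 0 A.succ + g A.succ 0) * w A + ∑ A, ∑ B, g A.succ B.succ * w A * w B := by
  simp only [Fin.sum_univ_succ, cons_val_zero, cons_val_succ, sum_add_distrib, add_mul, mul_one]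
  ring

theorem vecCons_one_div_eq_inv_smul {q : Fin (n + 1) → ℝ} (hq : q 0 ≠ 0) :
    vecCons 1 (fun A => q A.succ / q 0) = (q 0)⁻¹ • q := by
  ext i
  cases i using Fin.cases <;> simp [hq, div_eq_inv_mul]

theorem isBounded_setOf_quadForm_vecCons_one_nonpos {a : ℝ} (ha : 0 < a)
    (hpos : ∀ ξ : Fin n → ℝ, a ^ 2 * ∑ A, ξ A ^ 2 ≤ ∑ A, ∑ B, g A.succ B.succ * ξ A * ξ B) :
    Bornology.IsBounded {w : Fin n → ℝ | ∑ i, ∑ j, g i j * vecCons 1 w i * vecCons 1 w j ≤ 0} :=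
  (isBounded_setOf_sum_sq_le _).subset fun w hw =>
    sum_sq_le_of_add_sum_mul_add_nonpos ha (hpos w) <| by
      rwa [Set.mem_ofPred_eq, quadForm_vecCons_one] at hw

end Spatial

theorem mass_shell_image_bounded_general (m : ℝ)
    (g : Matrix (Fin 4) (Fin 4) ℝ)
    (hpos : ∃ a : ℝ, 0 < a ∧ ∀ ξ : Fin 3 → ℝ,
      a ^ 2 * (∑ A, (ξ A) ^ 2) ≤ ∑ A, ∑ B, g A.succ B.succ * ξ A * ξ B) :
    Bornology.IsBounded
      ((fun q : Fin 4 → ℝ => fun A : Fin 3 => q A.succ / q 0) ''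
        {q : Fin 4 → ℝ | (∑ i, ∑ j, g i j * q i * q j) = -m ^ 2 ∧ 0 < q 0}) := by
  obtain ⟨a, ha, hspatial⟩ := hpos
  refine (isBounded_setOf_quadForm_vecCons_one_nonpos g ha hspatial).subset ?_
  rintro _ ⟨q, ⟨hshell, hq0⟩, rfl⟩
  rw [Set.mem_ofPred_eq, vecCons_one_div_eq_inv_smul hq0.ne', quadForm_smul, hshell]
  exact mul_nonpos_of_nonneg_of_nonpos (sq_nonneg _) (neg_nonpos.mpr (sq_nonneg m))

/-- Proposition 1(ii): under uniform positivity of the spatial block of the metric,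
the image of the mass shell under `q ↦ (q²/q¹, q³/q¹, q⁴/q¹)` is bounded in ℝ³.
Indices: `0,1,2,3` in `Fin 4` correspond to `1,2,3,4`; `Fin.succ` embeds the
spatial indices `2,3,4`. -/
theorem mass_shell_image_bounded (m : ℝ) (hm : 0 < m)
    (g : Matrix (Fin 4) (Fin 4) ℝ) (hsym : g.IsSymm)
    (hpos : ∃ a : ℝ, 0 < a ∧ ∀ ξ : Fin 3 → ℝ,
      a ^ 2 * (∑ A, (ξ A) ^ 2) ≤ ∑ A, ∑ B, g A.succ B.succ * ξ A * ξ B) :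
    Bornology.IsBounded
      ((fun q : Fin 4 → ℝ => fun A : Fin 3 => q A.succ / q 0) ''
        {q : Fin 4 → ℝ | (∑ i, ∑ j, g i j * q i * q j) = -m ^ 2 ∧ 0 < q 0}) :=
  mass_shell_image_bounded_general m g hpos
end

section
/- For all real numbers a, b, c, with φ(v) = (a·f(v) + b·g(v) + c)², one has ∫_B φ(v) s(v) dv = (8π/189)·a² + (8π/63)·b² + (4π/15)·c². -/
/-!
Identify `ℝ³` with `ℝ × ℝ²` and slice the unit ball along the first coordinate `x` into discs of
radius `√(1 - x²)`. On each disc pass to polar coordinates: over `[-π, π]` every term of the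
expanded integrand that is odd in `cos θ` or in `sin θ` integrates to zero, and the surviving
moments `∫ sin² cos² = π/4`, `∫ sin⁴ = 3π/4`, `∫ sin² = π` make the disc integral a polynomial
in `1 - x²`. Integrating that polynomial over `[-1, 1]` gives the constants.
-/

open MeasureTheory Real

open Set

noncomputable def prodEquivEuclideanFinThree : ℝ × ℝ × ℝ ≃ᵐ EuclideanSpace ℝ (Fin 3) :=
  ((MeasurableEquiv.refl ℝ).prodCongr MeasurableEquiv.finTwoArrow.symm).trans
    ((MeasurableEquiv.piFinSuccAbove (fun _ : Fin 3 => ℝ) 0).symm.trans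
      (MeasurableEquiv.toLp 2 (Fin 3 → ℝ)))

@[simp]
lemma prodEquivEuclideanFinThree_apply_zero (p : ℝ × ℝ × ℝ) :
    prodEquivEuclideanFinThree p 0 = p.1 := rfl

@[simp]
lemma prodEquivEuclideanFinThree_apply_one (p : ℝ × ℝ × ℝ) :
    prodEquivEuclideanFinThree p 1 = p.2.1 := rfl

@[simp]
lemma prodEquivEuclideanFinThree_apply_two (p : ℝ × ℝ × ℝ) :
    prodEquivEuclideanFinThree p 2 = p.2.2 := rfl

lemma measurePreserving_prodEquivEuclideanFinThree :
    MeasurePreserving prodEquivEuclideanFinThree :=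
  ((EuclideanSpace.volume_preserving_symm_measurableEquiv_toLp (Fin 3)).symm _).comp
    (((volume_preserving_piFinSuccAbove (fun _ : Fin 3 => ℝ) 0).symm _).comp
      ((MeasurePreserving.id volume).prod ((volume_preserving_finTwoArrow ℝ).symm _)))

lemma prodEquivEuclideanFinThree_preimage_ball {r : ℝ} (hr : 0 ≤ r) :
    prodEquivEuclideanFinThree ⁻¹' Metric.ball 0 r =
      {p | p.1 ^ 2 + (p.2.1 ^ 2 + p.2.2 ^ 2) < r ^ 2} := by
  ext p
  simp [EuclideanSpace.ball_zero_eq r hr, Fin.sum_univ_three, add_assoc]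

lemma setIntegral_ball_euclideanFinThree {E : Type*} [NormedAddCommGroup E] [NormedSpace ℝ E]
    (f : EuclideanSpace ℝ (Fin 3) → E) {r : ℝ} (hr : 0 ≤ r) :
    ∫ v in Metric.ball 0 r, f v =
      ∫ p in {p : ℝ × ℝ × ℝ | p.1 ^ 2 + (p.2.1 ^ 2 + p.2.2 ^ 2) < r ^ 2},
        f (prodEquivEuclideanFinThree p) := by
  rw [← prodEquivEuclideanFinThree_preimage_ball hr,
    measurePreserving_prodEquivEuclideanFinThree.setIntegral_preimage_emb
      prodEquivEuclideanFinThree.measurableEmbedding]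

lemma setIntegral_unitBall_prod_eq_intervalIntegral {F : ℝ × ℝ × ℝ → ℝ} (hF : Continuous F) :
    ∫ p in {p : ℝ × ℝ × ℝ | p.1 ^ 2 + (p.2.1 ^ 2 + p.2.2 ^ 2) < 1}, F p =
      ∫ x in (-1 : ℝ)..1, ∫ w in {w : ℝ × ℝ | w.1 ^ 2 + w.2 ^ 2 < 1 - x ^ 2}, F (x, w) := by
  set S := {p : ℝ × ℝ × ℝ | p.1 ^ 2 + (p.2.1 ^ 2 + p.2.2 ^ 2) < 1}
  have hS : MeasurableSet S := (isOpen_lt (by fun_prop) continuous_const).measurableSet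
  have hint : Integrable (S.indicator F) (volume.prod volume) := by
    rw [← Measure.volume_eq_prod, integrable_indicator_iff hS]
    refine (hF.continuousOn.integrableOn_compact (isCompact_closedBall 0 1)).mono_set ?_
    rintro ⟨x, y, z⟩ h
    simp only [S, mem_ofPred_eq] at h
    simp only [mem_closedBall_zero_iff, Prod.norm_def, norm_eq_abs, max_le_iff,
      ← sq_le_one_iff_abs_le_one]
    refine ⟨?_, ?_, ?_⟩ <;> nlinarith [sq_nonneg x, sq_nonneg y, sq_nonneg z]
  have hslice (x : ℝ) : ∫ w in {w : ℝ × ℝ | w.1 ^ 2 + w.2 ^ 2 < 1 - x ^ 2}, F (x, w) =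
      ∫ w, S.indicator F (x, w) := by
    rw [← integral_indicator ((isOpen_lt (by fun_prop) continuous_const).measurableSet)]
    simp only [S, indicator_apply, mem_ofPred_eq, add_comm (x ^ 2), lt_sub_iff_add_lt]
  have hempty (x : ℝ) (hx : x ∉ Ioo (-1) 1) :
      ∫ w in {w : ℝ × ℝ | w.1 ^ 2 + w.2 ^ 2 < 1 - x ^ 2}, F (x, w) = 0 := by
    have hx1 : 1 ≤ x ^ 2 := by
      rw [mem_Ioo, ← abs_lt, ← sq_lt_one_iff_abs_lt_one] at hx
      exact not_lt.mp hx
    have : {w : ℝ × ℝ | w.1 ^ 2 + w.2 ^ 2 < 1 - x ^ 2} = ∅ :=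
      eq_empty_of_forall_notMem fun w hw => by
        nlinarith [mem_ofPred_eq ▸ hw, sq_nonneg w.1, sq_nonneg w.2]
    rw [this, Measure.restrict_empty, integral_zero_measure]
  rw [intervalIntegral.integral_of_le (by norm_num), integral_Ioc_eq_integral_Ioo,
    setIntegral_eq_integral_of_forall_compl_eq_zero hempty, ← integral_indicator hS,
    Measure.volume_eq_prod, integral_prod _ hint]
  simp only [hslice]

lemma setIntegral_disk_eq_polar {g : ℝ × ℝ → ℝ} (hg : Continuous g) {R : ℝ} (hR : 0 ≤ R) :
    ∫ w in {w : ℝ × ℝ | w.1 ^ 2 + w.2 ^ 2 < R ^ 2}, g w =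
      ∫ r in (0 : ℝ)..R, ∫ θ in -π..π, r * g (r * cos θ, r * sin θ) := by
  set D := {w : ℝ × ℝ | w.1 ^ 2 + w.2 ^ 2 < R ^ 2}
  have hD : MeasurableSet D := (isOpen_lt (by fun_prop) continuous_const).measurableSet
  have hpolar : polarCoord.target ∩ polarCoord.symm ⁻¹' D = Ioo 0 R ×ˢ Ioo (-π) π := by
    ext ⟨r, θ⟩
    simp only [polarCoord_target, polarCoord_symm_apply, D, mem_inter_iff, mem_prod, mem_preimage,
      mem_ofPred_eq, mem_Ioi, mem_Ioo]
    have hr : (r * cos θ) ^ 2 + (r * sin θ) ^ 2 = r ^ 2 := by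
      linear_combination r ^ 2 * cos_sq_add_sin_sq θ
    rw [hr]
    constructor
    · rintro ⟨⟨hr0, hθ⟩, hrR⟩
      exact ⟨⟨hr0, (pow_lt_pow_iff_left₀ hr0.le hR two_ne_zero).mp hrR⟩, hθ⟩
    · rintro ⟨⟨hr0, hrR⟩, hθ⟩
      exact ⟨⟨hr0, hθ⟩, pow_lt_pow_iff_left₀ hr0.le hR two_ne_zero |>.mpr hrR⟩
  have hint : IntegrableOn (fun p : ℝ × ℝ => p.1 * g (p.1 * cos p.2, p.1 * sin p.2))
      (Ioo 0 R ×ˢ Ioo (-π) π) (volume.prod volume) := by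
    rw [← Measure.volume_eq_prod]
    exact ((by fun_prop : Continuous _).continuousOn.integrableOn_compact
      (isCompact_Icc.prod isCompact_Icc)).mono_set
      (prod_mono Ioo_subset_Icc_self Ioo_subset_Icc_self)
  calc ∫ w in D, g w
      = ∫ p in polarCoord.target, (polarCoord.symm ⁻¹' D).indicator
          (fun p => p.1 * g (polarCoord.symm p)) p := by
        rw [← integral_indicator hD, ← integral_comp_polarCoord_symm]
        congr 1 with p
        by_cases hp : polarCoord.symm p ∈ D
        · rw [indicator_of_mem hp, indicator_of_mem (mem_preimage.mpr hp), smul_eq_mul]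
        · rw [indicator_of_notMem hp, indicator_of_notMem (mt mem_preimage.mp hp), smul_zero]
    _ = ∫ p in Ioo 0 R ×ˢ Ioo (-π) π, p.1 * g (p.1 * cos p.2, p.1 * sin p.2) := by
        rw [setIntegral_indicator (hD.preimage continuous_polarCoord_symm.measurable), hpolar]
        rfl
    _ = _ := by
        rw [Measure.volume_eq_prod, setIntegral_prod _ hint,
          intervalIntegral.integral_of_le hR, integral_Ioc_eq_integral_Ioo]
        simp only [intervalIntegral.integral_of_le (neg_le_self pi_pos.le),
          integral_Ioc_eq_integral_Ioo]

lemma setIntegral_disk_sq_linear_mul_sq (A B c : ℝ) {ρ : ℝ} (hρ : 0 ≤ ρ) :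
    ∫ w in {w : ℝ × ℝ | w.1 ^ 2 + w.2 ^ 2 < ρ}, (A * w.1 + B * w.2 + c) ^ 2 * w.2 ^ 2 =
      π / 24 * A ^ 2 * ρ ^ 3 + π / 8 * B ^ 2 * ρ ^ 3 + π / 4 * c ^ 2 * ρ ^ 2 := by
  obtain ⟨R, hR, rfl⟩ : ∃ R, 0 ≤ R ∧ R ^ 2 = ρ := ⟨√ρ, sqrt_nonneg ρ, sq_sqrt hρ⟩
  have hangular (r : ℝ) :
      ∫ θ in -π..π, r * ((A * (r * cos θ) + B * (r * sin θ) + c) ^ 2 * (r * sin θ) ^ 2) =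
        π / 4 * A ^ 2 * r ^ 5 + 3 * π / 4 * B ^ 2 * r ^ 5 + π * c ^ 2 * r ^ 3 := by
    -- `cos θ ^ 1` is the shape `cos θ ^ (2 * 0 + 1)` of `integral_sin_pow_mul_cos_pow_odd _ 0`.
    have hexpand : (fun θ => r * ((A * (r * cos θ) + B * (r * sin θ) + c) ^ 2 * (r * sin θ) ^ 2)) =
        fun θ => A ^ 2 * r ^ 5 * (sin θ ^ 2 * cos θ ^ 2) + B ^ 2 * r ^ 5 * sin θ ^ 4
          + c ^ 2 * r ^ 3 * sin θ ^ 2 + 2 * A * B * r ^ 5 * (sin θ ^ 3 * cos θ ^ 1)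
          + 2 * A * c * r ^ 4 * (sin θ ^ 2 * cos θ ^ 1) + 2 * B * c * r ^ 4 * sin θ ^ 3 := by
      funext θ; ring
    have hsin : sin (4 * π) = 0 := by exact_mod_cast sin_nat_mul_pi 4
    rw [hexpand]
    simp (disch := exact Continuous.intervalIntegrable (by fun_prop) _ _) only
      [intervalIntegral.integral_add, intervalIntegral.integral_const_mul,
        integral_sin_sq_mul_cos_sq, integral_sin_pow_mul_cos_pow_odd 3 0,
        integral_sin_pow_mul_cos_pow_odd 2 0, integral_sin_pow]
    norm_num [hsin]
    ring
  rw [setIntegral_disk_eq_polar (by fun_prop) hR]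
  simp only [hangular]
  simp (disch := exact Continuous.intervalIntegrable (by fun_prop) _ _) only
    [intervalIntegral.integral_add, intervalIntegral.integral_const_mul, integral_pow]
  ring

lemma integral_one_add_sq_mul_one_sub_sq_pow_three :
    ∫ x in (-1 : ℝ)..1, (1 + x) ^ 2 * (1 - x ^ 2) ^ 3 = 64 / 63 := by
  ring_nf
  simp (disch := exact Continuous.intervalIntegrable (by fun_prop) _ _) only
    [intervalIntegral.integral_add, intervalIntegral.integral_sub,
      intervalIntegral.integral_mul_const, integral_pow, integral_id, intervalIntegral.integral_const]
  norm_num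

lemma integral_one_sub_sq_sq : ∫ x in (-1 : ℝ)..1, (1 - x ^ 2) ^ 2 = 16 / 15 := by
  ring_nf
  simp (disch := exact Continuous.intervalIntegrable (by fun_prop) _ _) only
    [intervalIntegral.integral_add, intervalIntegral.integral_sub,
      intervalIntegral.integral_mul_const, integral_pow, intervalIntegral.integral_const]
  norm_num

/-- Coordinates `v 0, v 1, v 2` are the paper's `v₂, v₃, v₄`. -/
theorem integral_phi_s (a b c : ℝ) :
    (∫ v in Metric.ball (0 : EuclideanSpace ℝ (Fin 3)) 1,
      (a * ((1 + v 0) * v 1) + b * ((1 + v 0) * v 2) + c) ^ 2 * (v 2) ^ 2)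
      = (8 * π / 189) * a ^ 2 + (8 * π / 63) * b ^ 2 + (4 * π / 15) * c ^ 2 := by
  rw [setIntegral_ball_euclideanFinThree _ zero_le_one, one_pow]
  simp only [prodEquivEuclideanFinThree_apply_zero, prodEquivEuclideanFinThree_apply_one,
    prodEquivEuclideanFinThree_apply_two]
  rw [setIntegral_unitBall_prod_eq_intervalIntegral (by fun_prop)]
  calc _ = ∫ x in (-1 : ℝ)..1, (π / 24 * a ^ 2 + π / 8 * b ^ 2) * ((1 + x) ^ 2 * (1 - x ^ 2) ^ 3)
        + π / 4 * c ^ 2 * (1 - x ^ 2) ^ 2 := by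
        refine intervalIntegral.integral_congr fun x hx => ?_
        have h1x : 0 ≤ 1 - x ^ 2 := by
          rw [uIcc_of_le (by norm_num), mem_Icc, ← abs_le, ← sq_le_one_iff_abs_le_one] at hx
          linarith
        trans ∫ w in {w : ℝ × ℝ | w.1 ^ 2 + w.2 ^ 2 < 1 - x ^ 2},
            (a * (1 + x) * w.1 + b * (1 + x) * w.2 + c) ^ 2 * w.2 ^ 2
        · congr 1 with w
          ring
        · rw [setIntegral_disk_sq_linear_mul_sq _ _ _ h1x]
          ring
    _ = _ := by
        rw [intervalIntegral.integral_add (Continuous.intervalIntegrable (by fun_prop) _ _)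
            (Continuous.intervalIntegrable (by fun_prop) _ _),
          intervalIntegral.integral_const_mul, intervalIntegral.integral_const_mul,
          integral_one_add_sq_mul_one_sub_sq_pow_three, integral_one_sub_sq_sq]
        ring
end

section
/- Let a, b, c, h₁, h₂ be real numbers and φ(v) = (a·f(v) + b·g(v) + c)². Then the pair of equations ∫_B φ(v) f(v) dv = h₁ and ∫_B φ(v) g(v) dv = h₂ holds if and only if a·c = 105·h₁/(64π) and b·c = 105·h₂/(64π). -/
/-!
Reflecting one coordinate is a linear isometry, so it preserves the unit ball and Lebesgue
measure; averaging the integrand over the reflections `v₃ ↦ -v₃`, `v₄ ↦ -v₄`, `v₂ ↦ -v₂` kills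
every monomial that is odd in some coordinate, and leaves `∫_B φ f = 2ac ∫_B (v₃² + v₂² v₃²)`.
The swap `v₃ ↔ v₄` exchanges `f` and `g`, so `∫_B φ g` is the same with `b` in place of `a`.
The two moments come from the radial integrals `∫_B ‖v‖ᵏ = 4π / (k + 3)`: permuting coordinates
gives `∫_B v₃² = 4π/15`, and the orthogonal map `(x, y) ↦ ((x + y)/√2, (x - y)/√2)` relates the
quartic moments, `∫_B x⁴ = 3 ∫_B x² y²`, whence `∫_B v₂² v₃² = 4π/105`. So the two integrals are
`64π/105 · ac` and `64π/105 · bc`.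
-/

open MeasureTheory Real Set Metric Module

section CoordinateIsometries

variable {n : Type*} [Fintype n] [DecidableEq n]

noncomputable def EuclideanSpace.negCoord (j : n) : EuclideanSpace ℝ n ≃ₗᵢ[ℝ] EuclideanSpace ℝ n :=
  LinearIsometryEquiv.piLpCongrRight 2
    fun i => if i = j then LinearIsometryEquiv.neg ℝ else LinearIsometryEquiv.refl ℝ ℝ

@[simp]
theorem EuclideanSpace.negCoord_apply (j : n) (v : EuclideanSpace ℝ n) (i : n) :
    negCoord j v i = if i = j then -v i else v i := by
  unfold negCoord
  split_ifs with h <;> simp [h]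

noncomputable def EuclideanSpace.swapCoords (i j : n) :
    EuclideanSpace ℝ n ≃ₗᵢ[ℝ] EuclideanSpace ℝ n :=
  LinearIsometryEquiv.piLpCongrLeft 2 ℝ ℝ (Equiv.swap i j)

@[simp]
theorem EuclideanSpace.swapCoords_apply (i j : n) (v : EuclideanSpace ℝ n) (k : n) :
    swapCoords i j v k = v (Equiv.swap i j k) := by
  simp [swapCoords, LinearIsometryEquiv.piLpCongrLeft_apply, Equiv.piCongrLeft'_apply]

noncomputable def Matrix.toEuclideanIsometry (A : Matrix.orthogonalGroup n ℝ) :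
    EuclideanSpace ℝ n ≃ₗᵢ[ℝ] EuclideanSpace ℝ n :=
  Unitary.linearIsometryEquiv ⟨toEuclideanCLM (n := n) (𝕜 := ℝ) A, Unitary.map_mem _ A.2⟩

theorem Matrix.toEuclideanIsometry_apply (A : Matrix.orthogonalGroup n ℝ)
    (v : EuclideanSpace ℝ n) (i : n) :
    toEuclideanIsometry A v i = ∑ j, (A : Matrix n n ℝ) i j * v j := by
  change (toEuclideanCLM (n := n) (𝕜 := ℝ) (A : Matrix n n ℝ) v).ofLp i = _
  rw [ofLp_toEuclideanCLM]
  rfl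

end CoordinateIsometries

section Radial

variable {E : Type*} [NormedAddCommGroup E] [NormedSpace ℝ E] [Nontrivial E]
  [FiniteDimensional ℝ E] [MeasurableSpace E] [BorelSpace E] (μ : Measure E) [μ.IsAddHaarMeasure]

theorem setIntegral_unitBall_norm_pow (k : ℕ) :
    ∫ v in ball (0 : E) 1, ‖v‖ ^ k ∂μ = finrank ℝ E / (finrank ℝ E + k) * μ.real (ball 0 1) := by
  have hd : 1 ≤ finrank ℝ E := finrank_pos
  have hradial := integral_fun_norm_addHaar μ ((Iio (1 : ℝ)).indicator (· ^ k))
  have hball : ∀ v : E,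
      (Iio (1 : ℝ)).indicator (· ^ k) ‖v‖ = (ball (0 : E) 1).indicator (‖·‖ ^ k) v := by
    intro v
    by_cases hv : ‖v‖ < 1 <;> simp [indicator, hv]
  have hprofile : ∫ y in Ioi (0 : ℝ), y ^ (finrank ℝ E - 1) • (Iio (1 : ℝ)).indicator (· ^ k) y
      = 1 / (finrank ℝ E + k) := by
    have hpow : ∀ y : ℝ, y ^ (finrank ℝ E - 1) • (Iio (1 : ℝ)).indicator (· ^ k) y
        = (Iio (1 : ℝ)).indicator (· ^ (finrank ℝ E - 1 + k)) y := by
      intro y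
      by_cases hy : y < 1 <;> simp [indicator, hy, pow_add]
    simp_rw [hpow]
    rw [setIntegral_indicator measurableSet_Iio, Ioi_inter_Iio, ← integral_Ioc_eq_integral_Ioo,
      ← intervalIntegral.integral_of_le zero_le_one, integral_pow]
    rw [show ((finrank ℝ E - 1 + k : ℕ) : ℝ) + 1 = finrank ℝ E + k by
      push_cast [Nat.cast_sub hd]; ring]
    simp
  simp_rw [hball, integral_indicator measurableSet_ball] at hradial
  rw [hradial, hprofile, nsmul_eq_mul, smul_eq_mul]
  ring

end Radial

theorem Continuous.integrableOn_ball {X F : Type*} [MetricSpace X] [ProperSpace X]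
    [MeasurableSpace X] [OpensMeasurableSpace X] {μ : Measure X} [IsFiniteMeasureOnCompacts μ]
    [NormedAddCommGroup F] {f : X → F} (hf : Continuous f) (x : X) (r : ℝ) :
    IntegrableOn f (ball x r) μ :=
  (hf.continuousOn.integrableOn_compact (isCompact_closedBall x r)).mono_set ball_subset_closedBall

section Isometry

variable {E : Type*} [NormedAddCommGroup E] [InnerProductSpace ℝ E] [FiniteDimensional ℝ E]
  [MeasurableSpace E] [BorelSpace E]

theorem setIntegral_ball_comp_linearIsometryEquiv (e : E ≃ₗᵢ[ℝ] E) (F : E → ℝ) (r : ℝ) :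
    ∫ v in ball 0 r, F (e v) = ∫ v in ball 0 r, F v := by
  have hball : e ⁻¹' ball 0 r = ball 0 r := by ext v; simp
  simpa [hball] using e.measurePreserving.setIntegral_preimage_emb
    e.toMeasurableEquiv.measurableEmbedding F (ball 0 r)

theorem sum_mul_setIntegral_ball_eq {ι : Type*} [Fintype ι] (w : ι → ℝ) (e : ι → E ≃ₗᵢ[ℝ] E)
    {F G : E → ℝ} (hF : Continuous F) (r : ℝ) (hG : ∀ v, ∑ i, w i * F (e i v) = G v) :
    (∑ i, w i) * ∫ v in ball 0 r, F v = ∫ v in ball 0 r, G v := by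
  have hint : ∀ i, IntegrableOn (fun v => w i * F (e i v)) (ball (0 : E) r) := fun i =>
    ((hF.comp (e i).continuous).const_mul (w i)).integrableOn_ball 0 r
  simp_rw [← hG, integral_finsetSum _ fun i _ => hint i, integral_const_mul,
    setIntegral_ball_comp_linearIsometryEquiv, Finset.sum_mul]

theorem setIntegral_ball_eq_of_add_comp (e : E ≃ₗᵢ[ℝ] E) {F G : E → ℝ} (hF : Continuous F)
    (r : ℝ) (hG : ∀ v, F v + F (e v) = 2 * G v) :
    ∫ v in ball 0 r, F v = ∫ v in ball 0 r, G v := by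
  have h := sum_mul_setIntegral_ball_eq ![1, 1] ![.refl ℝ E, e] hF r fun v => by
    simpa using hG v
  norm_num [integral_const_mul] at h
  exact h

end Isometry

local notation "ℝ³" => EuclideanSpace ℝ (Fin 3)

open EuclideanSpace

theorem EuclideanSpace.norm_sq_fin_three (v : ℝ³) : ‖v‖ ^ 2 = v 0 ^ 2 + v 1 ^ 2 + v 2 ^ 2 := by
  simp [EuclideanSpace.norm_sq_eq, Fin.sum_univ_three]

noncomputable def hadamard01 : Matrix.orthogonalGroup (Fin 3) ℝ :=
  ⟨!![(√2)⁻¹, (√2)⁻¹, 0; (√2)⁻¹, -(√2)⁻¹, 0; 0, 0, 1], by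
    have h : ((√2)⁻¹) ^ 2 = 1 / 2 := by simp
    rw [Matrix.mem_orthogonalGroup_iff]
    ext i j
    fin_cases i <;> fin_cases j <;>
      simp [Matrix.mul_apply, Fin.sum_univ_three, ← sq, h] <;> norm_num⟩

theorem toEuclideanIsometry_hadamard01_sq_mul_sq (v : ℝ³) :
    Matrix.toEuclideanIsometry hadamard01 v 0 ^ 2 * Matrix.toEuclideanIsometry hadamard01 v 1 ^ 2
      = (v 0 ^ 2 - v 1 ^ 2) ^ 2 / 4 := by
  have h : ((√2)⁻¹) ^ 2 = 1 / 2 := by simp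
  simp only [Matrix.toEuclideanIsometry_apply, hadamard01, Fin.sum_univ_three, Matrix.of_apply,
    Matrix.cons_val', Matrix.cons_val, Matrix.cons_val_fin_one]
  linear_combination ((√2)⁻¹ ^ 2 + 1 / 2) * (v 0 ^ 2 - v 1 ^ 2) ^ 2 * h

theorem EuclideanSpace.measureReal_unitBall_fin_three :
    volume.real (ball (0 : ℝ³) 1) = 4 * π / 3 := by
  rw [measureReal_def, volume_ball_fin_three, ENNReal.ofReal_one, one_pow, one_mul, ENNReal.toReal_ofReal (by positivity)]
  ring

theorem EuclideanSpace.setIntegral_unitBall_norm_pow_fin_three (k : ℕ) :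
    ∫ v in ball (0 : ℝ³) 1, ‖v‖ ^ k = 4 * π / (k + 3) := by
  rw [setIntegral_unitBall_norm_pow, measureReal_unitBall_fin_three, finrank_euclideanSpace_fin]
  field_simp
  ring

theorem setIntegral_unitBall_sq_coord_one : ∫ v in ball (0 : ℝ³) 1, v 1 ^ 2 = 4 * π / 15 := by
  have h := sum_mul_setIntegral_ball_eq ![1, 1, 1]
    ![.refl ℝ ℝ³, swapCoords 0 1, swapCoords 1 2] (F := fun v => v 1 ^ 2)
    (by fun_prop) 1 (G := fun v => ‖v‖ ^ 2) fun v => by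
      simp only [Fin.sum_univ_three, Matrix.cons_val_zero, Matrix.cons_val_one, Matrix.cons_val,
        LinearIsometryEquiv.coe_refl, id_eq, swapCoords_apply, Equiv.swap_apply_left,
        Equiv.swap_apply_right, norm_sq_fin_three]
      ring
  rw [setIntegral_unitBall_norm_pow_fin_three] at h
  simp only [Fin.sum_univ_three, Matrix.cons_val_zero, Matrix.cons_val_one, Matrix.cons_val] at h
  linarith

theorem setIntegral_unitBall_sq_coord_zero_mul_sq_coord_one :
    ∫ v in ball (0 : ℝ³) 1, v 0 ^ 2 * v 1 ^ 2 = 4 * π / 105 := by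
  let H := Matrix.toEuclideanIsometry hadamard01
  -- `‖v‖⁴ = ∑ vᵢ⁴ + 2 ∑ vᵢ² vⱼ²`, and each `H`-term below is `(vᵢ² - vⱼ²)² / 4`.
  have h := sum_mul_setIntegral_ball_eq ![3, 3, 3, 2, 2, 2]
    ![.refl ℝ ℝ³, swapCoords 1 2, swapCoords 0 2, H, (swapCoords 1 2).trans H,
      (swapCoords 0 2).trans H]
    (F := fun v => v 0 ^ 2 * v 1 ^ 2) (by fun_prop) 1 (G := fun v => ‖v‖ ^ 4) fun v => by
      simp only [Fin.sum_univ_six, Matrix.cons_val, LinearIsometryEquiv.trans_apply, H,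
        toEuclideanIsometry_hadamard01_sq_mul_sq]
      rw [show ‖v‖ ^ 4 = (‖v‖ ^ 2) ^ 2 by ring, norm_sq_fin_three]
      simp only [LinearIsometryEquiv.coe_refl, id_eq, swapCoords_apply, Equiv.swap_apply_left,
        Equiv.swap_apply_of_ne_of_ne, ne_eq, Fin.reduceEq, not_false_eq_true]
      ring
  rw [setIntegral_unitBall_norm_pow_fin_three] at h
  simp only [Fin.sum_univ_six, Matrix.cons_val_zero, Matrix.cons_val_one, Matrix.cons_val] at h
  linarith

theorem integral_phi_mul_f (a b c : ℝ) :
    ∫ v in ball (0 : ℝ³) 1,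
        (a * ((1 + v 0) * v 1) + b * ((1 + v 0) * v 2) + c) ^ 2 * ((1 + v 0) * v 1)
      = 64 * π / 105 * (a * c) := by
  calc
    _ = ∫ v in ball (0 : ℝ³) 1, 2 * a * ((1 + v 0) * v 1) ^ 2 * (b * ((1 + v 0) * v 2) + c) :=
        setIntegral_ball_eq_of_add_comp (negCoord 1) (by fun_prop) 1 fun v => by
          simp only [negCoord_apply, Fin.reduceEq, ↓reduceIte]
          ring
    _ = ∫ v in ball (0 : ℝ³) 1, 2 * a * c * ((1 + v 0) * v 1) ^ 2 :=
        setIntegral_ball_eq_of_add_comp (negCoord 2) (by fun_prop) 1 fun v => by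
          simp only [negCoord_apply, Fin.reduceEq, ↓reduceIte]
          ring
    _ = ∫ v in ball (0 : ℝ³) 1, 2 * a * c * (v 1 ^ 2 + v 0 ^ 2 * v 1 ^ 2) :=
        setIntegral_ball_eq_of_add_comp (negCoord 0) (by fun_prop) 1 fun v => by
          simp only [negCoord_apply, Fin.reduceEq, ↓reduceIte]
          ring
    _ = 2 * a * c *
          ((∫ v in ball (0 : ℝ³) 1, v 1 ^ 2) + ∫ v in ball (0 : ℝ³) 1, v 0 ^ 2 * v 1 ^ 2) := by
        rw [integral_const_mul, integral_add
          ((by fun_prop : Continuous fun v : ℝ³ => v 1 ^ 2).integrableOn_ball 0 1)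
          ((by fun_prop : Continuous fun v : ℝ³ => v 0 ^ 2 * v 1 ^ 2).integrableOn_ball 0 1)]
    _ = 64 * π / 105 * (a * c) := by
        rw [setIntegral_unitBall_sq_coord_one, setIntegral_unitBall_sq_coord_zero_mul_sq_coord_one]
        ring

theorem integral_phi_mul_g (a b c : ℝ) :
    ∫ v in ball (0 : ℝ³) 1,
        (a * ((1 + v 0) * v 1) + b * ((1 + v 0) * v 2) + c) ^ 2 * ((1 + v 0) * v 2)
      = 64 * π / 105 * (b * c) := by
  rw [← integral_phi_mul_f b a c, ← setIntegral_ball_comp_linearIsometryEquiv (swapCoords 1 2)]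
  congr! 2 with v
  simp only [swapCoords_apply, Equiv.swap_apply_left, Equiv.swap_apply_right,
    Equiv.swap_apply_of_ne_of_ne, ne_eq, Fin.reduceEq, not_false_eq_true]
  ring

/-- (D.13): with `φ(v) = (a f(v) + b g(v) + c)²`, `f(v) = (1+v₂)v₃`,
`g(v) = (1+v₂)v₄` on the open unit ball `B ⊂ ℝ³`, the integral system
`⟨φ,f⟩ = h₁, ⟨φ,g⟩ = h₂` holds iff `ac = 105h₁/(64π)` and `bc = 105h₂/(64π)`;
coordinates `v 0, v 1, v 2` are `v₂, v₃, v₄`. -/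
theorem integral_system_reduction (a b c h₁ h₂ : ℝ) :
    ((∫ v in Metric.ball (0 : EuclideanSpace ℝ (Fin 3)) 1,
        (a * ((1 + v 0) * v 1) + b * ((1 + v 0) * v 2) + c) ^ 2 * ((1 + v 0) * v 1))
          = h₁ ∧
     (∫ v in Metric.ball (0 : EuclideanSpace ℝ (Fin 3)) 1,
        (a * ((1 + v 0) * v 1) + b * ((1 + v 0) * v 2) + c) ^ 2 * ((1 + v 0) * v 2))
          = h₂) ↔
    (a * c = 105 * h₁ / (64 * π) ∧ b * c = 105 * h₂ / (64 * π)) := by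
  have hπ : (64 : ℝ) * π ≠ 0 := by positivity
  rw [integral_phi_mul_f, integral_phi_mul_g, eq_div_iff hπ, eq_div_iff hπ]
  constructor <;> rintro ⟨h, h'⟩ <;> constructor <;> linarith
end
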